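/- For n ∈ ℕ define on ℤ × ℝ the functions f_1^{(n)}(ξ,τ) = f_2^{(n)}(ξ,τ) = δ_{ξ,2n} χ_{[-1,1]}(τ + ξ²), f_3^{(n)}(ξ,τ) = δ_{ξ,−n} χ_{[-1,1]}(τ + ξ²), f_4^{(n)}(ξ,τ) = δ_{ξ,0} χ_{[-1,1]}(τ + ξ²). Then the fourfold convolution satisfies (f_1^{(n)} * f_2^{(n)} * f_3^{(n)} * f_4^{(n)})(ξ,τ) ≥ δ_{ξ,3n} χ_{[-1,1]}(τ + ξ²), and consequently the periodic estimate ‖∏_{i=1}^4 u_i‖_{X^+_{s,b'}} ≤ c∏_{i=1}^4 ‖u_i‖_{X^+_{s,b}} fails for every s < 0 and all b, b' ∈ ℝ. -/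

import Mathlib

open MeasureTheory
open scoped ENNReal

/-- Japanese bracket. -/
noncomputable def jb (x : ℝ) : ℝ := Real.sqrt (1 + x ^ 2)

/-- Fourfold convolution on `ℤ × ℝ` (real-valued version). -/
noncomputable def conv4 (f g h k : ℤ × ℝ → ℝ) : ℤ × ℝ → ℝ := fun p =>
  ∑' ξ₁ : ℤ, ∑' ξ₂ : ℤ, ∑' ξ₃ : ℤ, ∫ τ₁ : ℝ, ∫ τ₂ : ℝ, ∫ τ₃ : ℝ,
    f (ξ₁, τ₁) * g (ξ₂, τ₂) * h (ξ₃, τ₃) *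
      k (p.1 - ξ₁ - ξ₂ - ξ₃, p.2 - τ₁ - τ₂ - τ₃)

/-- Fourfold convolution on `ℤ × ℝ` (`ℝ≥0∞`-valued version). -/
noncomputable def conv4E (f g h k : ℤ × ℝ → ℝ≥0∞) : ℤ × ℝ → ℝ≥0∞ := fun p =>
  ∑' ξ₁ : ℤ, ∑' ξ₂ : ℤ, ∑' ξ₃ : ℤ, ∫⁻ τ₁ : ℝ, ∫⁻ τ₂ : ℝ, ∫⁻ τ₃ : ℝ,
    f (ξ₁, τ₁) * g (ξ₂, τ₂) * h (ξ₃, τ₃) *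
      k (p.1 - ξ₁ - ξ₂ - ξ₃, p.2 - τ₁ - τ₂ - τ₃)

/-- The periodic `X^+_{s,b}` norm on the Fourier side (counting measure in `ξ ∈ ℤ`). -/
noncomputable def XpNormZ (s b : ℝ) (F : ℤ × ℝ → ℝ≥0∞) : ℝ≥0∞ :=
  (∑' ξ : ℤ, ∫⁻ τ : ℝ,
      ENNReal.ofReal (jb (ξ : ℝ) ^ (2 * s) * jb (τ + (ξ : ℝ) ^ 2) ^ (2 * b)) *
        F (ξ, τ) ^ 2) ^ ((1 : ℝ) / 2)

/-- `δ_{ξ,k} χ_{[-1,1]}(τ + ξ²)` as a real function on `ℤ × ℝ`. -/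
noncomputable def bump (k : ℤ) : ℤ × ℝ → ℝ := fun p =>
  (if p.1 = k then 1 else 0) *
    (if p.2 + (p.1 : ℝ) ^ 2 ∈ Set.Icc (-1 : ℝ) 1 then 1 else 0)

/-!
The frequencies `2n, 2n, -n, 0` are resonant for the target frequency `3n`: they add up to `3n`
and their squares add up to `(3n)²`. Hence the modulations `τ + ξ²` add up as well, and at
frequency `3n` the convolution of the four bumps is a convolution in `τ` of four unit boxcars,
which is at least `1` wherever the target bump is `1`: each convolution step keeps a window of
length one on which both factors are at least `1`.

The `X^+_{s,b}` norm of a bump at frequency `k` is `⟨k⟩^s` times a constant depending only on `b`.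
The estimate would therefore give `⟨3n⟩^{2s} ≲ ⟨2n⟩^{4s} ⟨n⟩^{2s} ≤ ⟨3n⟩^{2s} ⟨n⟩^{2s}`, that is
`1 ≲ ⟨n⟩^{2s}`, which fails as `n → ∞` when `s < 0`.
-/

open Set Filter Topology

noncomputable def boxcar : ℝ → ℝ≥0∞ := (Icc (-1 : ℝ) 1).indicator 1

lemma boxcar_le_one (x : ℝ) : boxcar x ≤ 1 :=
  indicator_le_self' (fun _ _ => zero_le_one) x

lemma boxcar_ne_top (x : ℝ) : boxcar x ≠ ∞ :=
  ne_top_of_le_ne_top ENNReal.one_ne_top (boxcar_le_one x)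

lemma boxcar_of_abs_le {x : ℝ} (hx : |x| ≤ 1) : boxcar x = 1 :=
  indicator_of_mem (show x ∈ Icc (-1 : ℝ) 1 from abs_le.mp hx) _

lemma boxcar_of_one_lt_abs {x : ℝ} (hx : 1 < |x|) : boxcar x = 0 :=
  indicator_of_notMem (fun h : x ∈ Icc (-1 : ℝ) 1 => hx.not_ge (abs_le.mpr h)) _

lemma boxcar_sq (x : ℝ) : boxcar x ^ 2 = boxcar x := by
  by_cases hx : x ∈ Icc (-1 : ℝ) 1 <;> simp [boxcar, hx]

@[fun_prop]
lemma measurable_boxcar : Measurable boxcar :=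
  measurable_one.indicator measurableSet_Icc

lemma lintegral_boxcar_add (a : ℝ) : ∫⁻ τ, boxcar (τ + a) = 2 := by
  rw [lintegral_add_right_eq_self boxcar a, boxcar, lintegral_indicator_one measurableSet_Icc,
    Real.volume_Icc]
  norm_num

lemma lintegral_mul_boxcar (f : ℝ → ℝ≥0∞) :
    ∫⁻ τ, f τ * boxcar τ = ∫⁻ τ in Icc (-1 : ℝ) 1, f τ := by
  simp_rw [boxcar, ← indicator_mul_right, Pi.one_apply, mul_one]
  exact lintegral_indicator measurableSet_Icc f

noncomputable def boxcarConv (a : ℝ) (G : ℝ → ℝ≥0∞) (r : ℝ) : ℝ≥0∞ :=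
  ∫⁻ τ, boxcar (τ + a) * G (r - τ)

lemma one_le_boxcarConv {G : ℝ → ℝ≥0∞} {a b r : ℝ} (hG : ∀ x, |x + b| ≤ 1 → 1 ≤ G x)
    (hr : |r + a + b| ≤ 1) : 1 ≤ boxcarConv a G r := by
  obtain ⟨hr₁, hr₂⟩ := abs_le.mp hr
  -- on this unit window both `τ + a` and `r - τ + b` stay in `[-1, 1]`
  set m := (r + a + b) / 2 with hm
  have hwindow : ∀ τ ∈ Icc (m - 1 / 2 - a) (m + 1 / 2 - a), 1 ≤ boxcar (τ + a) * G (r - τ) := by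
    rintro τ ⟨h₁, h₂⟩
    rw [boxcar_of_abs_le (abs_le.mpr ⟨by linarith, by linarith⟩), one_mul]
    exact hG _ (abs_le.mpr ⟨by linarith, by linarith⟩)
  calc 1 = ∫⁻ _ in Icc (m - 1 / 2 - a) (m + 1 / 2 - a), 1 := by norm_num [Real.volume_Icc]
    _ ≤ ∫⁻ τ in Icc (m - 1 / 2 - a) (m + 1 / 2 - a), boxcar (τ + a) * G (r - τ) :=
      setLIntegral_mono' measurableSet_Icc hwindow
    _ ≤ boxcarConv a G r := setLIntegral_le_lintegral _ _

lemma boxcarConv_le {G : ℝ → ℝ≥0∞} {C : ℝ≥0∞} (hG : ∀ x, G x ≤ C) (a r : ℝ) :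
    boxcarConv a G r ≤ 2 * C :=
  calc boxcarConv a G r ≤ ∫⁻ τ, boxcar (τ + a) * C :=
        lintegral_mono fun τ => mul_le_mul_right (hG _) _
    _ = 2 * C := by rw [lintegral_mul_const _ (by fun_prop), lintegral_boxcar_add]

lemma measurable_boxcarConv {G : ℝ → ℝ≥0∞} (hG : Measurable G) (a : ℝ) :
    Measurable (boxcarConv a G) :=
  Measurable.lintegral_prod_right (by fun_prop)

lemma integral_toReal_boxcarConv {G : ℝ → ℝ≥0∞} (hG : Measurable G) {C : ℝ≥0∞}
    (hG_le : ∀ x, G x ≤ C) (hC : C ≠ ∞) (a r : ℝ) :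
    ∫ τ, (boxcar (τ + a)).toReal * (G (r - τ)).toReal = (boxcarConv a G r).toReal := by
  simp_rw [← ENNReal.toReal_mul]
  refine integral_toReal (by fun_prop) (ae_of_all _ fun τ => ?_)
  exact ENNReal.mul_lt_top (boxcar_ne_top _).lt_top ((hG_le _).trans_lt hC.lt_top)

noncomputable def bumpE (k : ℤ) (p : ℤ × ℝ) : ℝ≥0∞ :=
  if p.1 = k then boxcar (p.2 + (p.1 : ℝ) ^ 2) else 0

@[simp]
lemma bumpE_self (k : ℤ) (τ : ℝ) : bumpE k (k, τ) = boxcar (τ + (k : ℝ) ^ 2) := if_pos rfl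

lemma bumpE_of_ne {k ξ : ℤ} (h : ξ ≠ k) (τ : ℝ) : bumpE k (ξ, τ) = 0 := if_neg h

lemma bump_eq_toReal_bumpE (k : ℤ) : bump k = fun p => (bumpE k p).toReal := by
  ext p
  simp only [bump, bumpE, boxcar, indicator_apply, Pi.one_apply]
  split_ifs <;> simp

lemma measurable_bumpE (k : ℤ) : Measurable (bumpE k) := by
  refine measurable_from_prod_countable_right fun ξ => ?_
  by_cases h : ξ = k
  · simp only [bumpE, h, if_true]
    fun_prop
  · simp only [bumpE, h, if_false]
    exact measurable_const

lemma conv4E_of_single {f₁ f₂ f₃ f₄ : ℤ × ℝ → ℝ≥0∞} {k₁ k₂ k₃ : ℤ}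
    (h₁ : ∀ ξ τ, ξ ≠ k₁ → f₁ (ξ, τ) = 0) (h₂ : ∀ ξ τ, ξ ≠ k₂ → f₂ (ξ, τ) = 0)
    (h₃ : ∀ ξ τ, ξ ≠ k₃ → f₃ (ξ, τ) = 0) (p : ℤ × ℝ) :
    conv4E f₁ f₂ f₃ f₄ p = ∫⁻ τ₁, ∫⁻ τ₂, ∫⁻ τ₃, f₁ (k₁, τ₁) * f₂ (k₂, τ₂) * f₃ (k₃, τ₃) *
      f₄ (p.1 - k₁ - k₂ - k₃, p.2 - τ₁ - τ₂ - τ₃) := by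
  rw [conv4E, tsum_eq_single k₁ fun ξ h => by simp [h₁, h],
    tsum_eq_single k₂ fun ξ h => by simp [h₂, h], tsum_eq_single k₃ fun ξ h => by simp [h₃, h]]

lemma conv4_of_single {f₁ f₂ f₃ f₄ : ℤ × ℝ → ℝ} {k₁ k₂ k₃ : ℤ}
    (h₁ : ∀ ξ τ, ξ ≠ k₁ → f₁ (ξ, τ) = 0) (h₂ : ∀ ξ τ, ξ ≠ k₂ → f₂ (ξ, τ) = 0)
    (h₃ : ∀ ξ τ, ξ ≠ k₃ → f₃ (ξ, τ) = 0) (p : ℤ × ℝ) :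
    conv4 f₁ f₂ f₃ f₄ p = ∫ τ₁, ∫ τ₂, ∫ τ₃, f₁ (k₁, τ₁) * f₂ (k₂, τ₂) * f₃ (k₃, τ₃) *
      f₄ (p.1 - k₁ - k₂ - k₃, p.2 - τ₁ - τ₂ - τ₃) := by
  rw [conv4, tsum_eq_single k₁ fun ξ h => by simp [h₁, h],
    tsum_eq_single k₂ fun ξ h => by simp [h₂, h], tsum_eq_single k₃ fun ξ h => by simp [h₃, h]]

noncomputable def conv4Profile (k₁ k₂ k₃ k₄ : ℤ) : ℝ → ℝ≥0∞ :=
  boxcarConv ((k₁ : ℝ) ^ 2) <| boxcarConv ((k₂ : ℝ) ^ 2) <| boxcarConv ((k₃ : ℝ) ^ 2)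
    fun x => boxcar (x + (k₄ : ℝ) ^ 2)

lemma conv4Profile_le (k₁ k₂ k₃ k₄ : ℤ) (r : ℝ) : conv4Profile k₁ k₂ k₃ k₄ r ≤ 8 :=
  (boxcarConv_le (boxcarConv_le (boxcarConv_le (fun _ => boxcar_le_one _) _) _) _ _).trans_eq
    (by norm_num)

lemma conv4Profile_ne_top (k₁ k₂ k₃ k₄ : ℤ) (r : ℝ) : conv4Profile k₁ k₂ k₃ k₄ r ≠ ∞ :=
  ne_top_of_le_ne_top (by norm_num) (conv4Profile_le k₁ k₂ k₃ k₄ r)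

lemma one_le_conv4Profile {k₁ k₂ k₃ k₄ : ℤ} {r : ℝ}
    (h : |r + (k₁ : ℝ) ^ 2 + (k₂ : ℝ) ^ 2 + (k₃ : ℝ) ^ 2 + (k₄ : ℝ) ^ 2| ≤ 1) :
    1 ≤ conv4Profile k₁ k₂ k₃ k₄ r := by
  refine one_le_boxcarConv (b := (k₂ : ℝ) ^ 2 + (k₃ : ℝ) ^ 2 + (k₄ : ℝ) ^ 2) (fun x hx => ?_)
    (by convert h using 2; ring)
  refine one_le_boxcarConv (b := (k₃ : ℝ) ^ 2 + (k₄ : ℝ) ^ 2) (fun y hy => ?_)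
    (by convert hx using 2; ring)
  exact one_le_boxcarConv (fun z hz => (boxcar_of_abs_le hz).ge) (by convert hy using 2; ring)

lemma toReal_conv4Profile (k₁ k₂ k₃ k₄ : ℤ) (r : ℝ) :
    (conv4Profile k₁ k₂ k₃ k₄ r).toReal =
      ∫ τ₁, (boxcar (τ₁ + (k₁ : ℝ) ^ 2)).toReal * ∫ τ₂, (boxcar (τ₂ + (k₂ : ℝ) ^ 2)).toReal *
        ∫ τ₃, (boxcar (τ₃ + (k₃ : ℝ) ^ 2)).toReal *
          (boxcar (r - τ₁ - τ₂ - τ₃ + (k₄ : ℝ) ^ 2)).toReal := by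
  have hG₃ : Measurable fun x => boxcar (x + (k₄ : ℝ) ^ 2) := by fun_prop
  have hG₂ := measurable_boxcarConv hG₃ ((k₃ : ℝ) ^ 2)
  have h₃ (x : ℝ) := integral_toReal_boxcarConv hG₃ (fun _ => boxcar_le_one _) ENNReal.one_ne_top
    ((k₃ : ℝ) ^ 2) x
  have h₂ (x : ℝ) := integral_toReal_boxcarConv hG₂ (boxcarConv_le (fun _ => boxcar_le_one _) _)
    (by norm_num) ((k₂ : ℝ) ^ 2) x
  simp_rw [h₃, h₂]
  exact (integral_toReal_boxcarConv (measurable_boxcarConv hG₂ _)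
    (boxcarConv_le (boxcarConv_le (fun _ => boxcar_le_one _) _) _) (by norm_num) _ r).symm

lemma conv4E_bumpE (k₁ k₂ k₃ k₄ : ℤ) (p : ℤ × ℝ) :
    conv4E (bumpE k₁) (bumpE k₂) (bumpE k₃) (bumpE k₄) p =
      if p.1 = k₁ + k₂ + k₃ + k₄ then conv4Profile k₁ k₂ k₃ k₄ p.2 else 0 := by
  rw [conv4E_of_single (fun _ _ h => bumpE_of_ne h _) (fun _ _ h => bumpE_of_ne h _)
    (fun _ _ h => bumpE_of_ne h _)]
  split_ifs with h
  · rw [show p.1 - k₁ - k₂ - k₃ = k₄ by omega]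
    simp only [bumpE_self, conv4Profile, boxcarConv, mul_assoc]
    simp only [lintegral_const_mul', boxcar_ne_top, ne_eq, not_false_eq_true]
  · simp [bumpE_of_ne (show p.1 - k₁ - k₂ - k₃ ≠ k₄ by omega)]

lemma conv4_bump (k₁ k₂ k₃ k₄ : ℤ) (p : ℤ × ℝ) :
    conv4 (bump k₁) (bump k₂) (bump k₃) (bump k₄) p =
      (conv4E (bumpE k₁) (bumpE k₂) (bumpE k₃) (bumpE k₄) p).toReal := by
  have hE (k : ℤ) : ∀ ξ τ, ξ ≠ k → (bumpE k (ξ, τ)).toReal = 0 := fun _ τ h => by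
    rw [bumpE_of_ne h τ, ENNReal.toReal_zero]
  rw [bump_eq_toReal_bumpE, bump_eq_toReal_bumpE, bump_eq_toReal_bumpE, bump_eq_toReal_bumpE,
    conv4E_bumpE, conv4_of_single (hE k₁) (hE k₂) (hE k₃)]
  split_ifs with h
  · rw [show p.1 - k₁ - k₂ - k₃ = k₄ by omega, toReal_conv4Profile]
    simp only [bumpE_self, mul_assoc, integral_const_mul]
  · simp [bumpE_of_ne (show p.1 - k₁ - k₂ - k₃ ≠ k₄ by omega)]

lemma conv4E_bumpE_ne_top (k₁ k₂ k₃ k₄ : ℤ) (p : ℤ × ℝ) :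
    conv4E (bumpE k₁) (bumpE k₂) (bumpE k₃) (bumpE k₄) p ≠ ∞ := by
  rw [conv4E_bumpE]
  split_ifs
  exacts [conv4Profile_ne_top _ _ _ _ _, ENNReal.zero_ne_top]

lemma bumpE_le_conv4E {k k₁ k₂ k₃ k₄ : ℤ} (hsum : k = k₁ + k₂ + k₃ + k₄)
    (hsq : k ^ 2 = k₁ ^ 2 + k₂ ^ 2 + k₃ ^ 2 + k₄ ^ 2) (p : ℤ × ℝ) :
    bumpE k p ≤ conv4E (bumpE k₁) (bumpE k₂) (bumpE k₃) (bumpE k₄) p := by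
  rw [conv4E_bumpE, bumpE, ← hsum]
  split_ifs with hp
  · by_cases hr : |p.2 + (p.1 : ℝ) ^ 2| ≤ 1
    · rw [boxcar_of_abs_le hr]
      refine one_le_conv4Profile ?_
      have hsqℝ : (k : ℝ) ^ 2 = (k₁ : ℝ) ^ 2 + (k₂ : ℝ) ^ 2 + (k₃ : ℝ) ^ 2 + (k₄ : ℝ) ^ 2 := by
        exact_mod_cast hsq
      convert hr using 2
      rw [hp, hsqℝ]
      ring
    · rw [boxcar_of_one_lt_abs (not_le.mp hr)]
      exact zero_le
  · exact le_rfl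

lemma bump_le_conv4 {k k₁ k₂ k₃ k₄ : ℤ} (hsum : k = k₁ + k₂ + k₃ + k₄)
    (hsq : k ^ 2 = k₁ ^ 2 + k₂ ^ 2 + k₃ ^ 2 + k₄ ^ 2) (p : ℤ × ℝ) :
    bump k p ≤ conv4 (bump k₁) (bump k₂) (bump k₃) (bump k₄) p := by
  rw [conv4_bump, bump_eq_toReal_bumpE]
  exact ENNReal.toReal_mono (conv4E_bumpE_ne_top _ _ _ _ _) (bumpE_le_conv4E hsum hsq p)

lemma XpNormZ_mono {s b : ℝ} {F G : ℤ × ℝ → ℝ≥0∞} (h : F ≤ G) :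
    XpNormZ s b F ≤ XpNormZ s b G := by
  unfold XpNormZ
  gcongr with ξ τ
  exact h _

lemma XpNormZ_sq (s b : ℝ) (F : ℤ × ℝ → ℝ≥0∞) :
    XpNormZ s b F ^ 2 = ∑' ξ : ℤ, ∫⁻ τ : ℝ,
      ENNReal.ofReal (jb (ξ : ℝ) ^ (2 * s) * jb (τ + (ξ : ℝ) ^ 2) ^ (2 * b)) * F (ξ, τ) ^ 2 := by
  rw [XpNormZ, ← ENNReal.rpow_natCast, ← ENNReal.rpow_mul]
  norm_num

lemma jb_rpow_two_mul (x s : ℝ) : jb x ^ (2 * s) = (1 + x ^ 2) ^ s := by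
  rw [jb, Real.sqrt_eq_rpow, ← Real.rpow_mul (by positivity)]
  congr 1
  ring

lemma continuous_jb_rpow (e : ℝ) : Continuous fun x => jb x ^ e :=
  (Real.continuous_sqrt.comp (by fun_prop)).rpow_const fun _ =>
    Or.inl (Real.sqrt_pos.mpr (by positivity)).ne'

noncomputable def weightMass (b : ℝ) : ℝ≥0∞ :=
  ∫⁻ τ in Icc (-1 : ℝ) 1, ENNReal.ofReal (jb τ ^ (2 * b))

lemma weightMass_pos (b : ℝ) : 0 < weightMass b := by
  rw [weightMass, setLIntegral_pos_iff (continuous_jb_rpow _).measurable.ennreal_ofReal]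
  have hsupp : Function.support (fun τ => ENNReal.ofReal (jb τ ^ (2 * b))) = univ := by
    ext τ
    simp [jb_rpow_two_mul, Real.rpow_pos_of_pos (by positivity : (0 : ℝ) < 1 + τ ^ 2)]
  simp [hsupp, Real.volume_Icc]

lemma weightMass_ne_top (b : ℝ) : weightMass b ≠ ∞ :=
  (continuous_jb_rpow _).integrableOn_Icc.lintegral_lt_top.ne

lemma XpNormZ_bumpE_sq (s b : ℝ) (k : ℤ) :
    XpNormZ s b (bumpE k) ^ 2 = ENNReal.ofReal ((1 + (k : ℝ) ^ 2) ^ s) * weightMass b := by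
  rw [XpNormZ_sq, tsum_eq_single k fun ξ h => by simp [bumpE_of_ne h]]
  simp only [bumpE_self, boxcar_sq, jb_rpow_two_mul (k : ℝ),
    ENNReal.ofReal_mul (Real.rpow_nonneg (by positivity : (0 : ℝ) ≤ 1 + (k : ℝ) ^ 2) s), mul_assoc]
  rw [lintegral_const_mul' _ _ ENNReal.ofReal_ne_top, weightMass, ← lintegral_mul_boxcar]
  congr 1
  exact lintegral_add_right_eq_self (fun τ => ENNReal.ofReal (jb τ ^ (2 * b)) * boxcar τ) _

lemma resonance_rpow_le {s : ℝ} (hs : s ≤ 0) (n : ℕ) :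
    (1 + (2 * n : ℝ) ^ 2) ^ s * (1 + (2 * n : ℝ) ^ 2) ^ s ≤ (1 + (3 * n : ℝ) ^ 2) ^ s := by
  rw [← Real.mul_rpow (by positivity) (by positivity)]
  refine Real.rpow_le_rpow_of_nonpos (by positivity) ?_ hs
  have : (n : ℝ) ≤ n ^ 2 := by exact_mod_cast Nat.le_self_pow two_ne_zero n
  nlinarith

lemma weightMass_le_of_quartic_estimate {s b b' c : ℝ} (hs : s ≤ 0)
    (hc : ∀ F₁ F₂ F₃ F₄ : ℤ × ℝ → ℝ≥0∞,
      Measurable F₁ → Measurable F₂ → Measurable F₃ → Measurable F₄ →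
      XpNormZ s b' (conv4E F₁ F₂ F₃ F₄) ≤
        ENNReal.ofReal c * XpNormZ s b F₁ * XpNormZ s b F₂ * XpNormZ s b F₃ * XpNormZ s b F₄)
    (n : ℕ) :
    weightMass b' ≤
      ENNReal.ofReal c ^ 2 * weightMass b ^ 4 * ENNReal.ofReal ((1 + (n : ℝ) ^ 2) ^ s) := by
  have hest := (XpNormZ_mono (bumpE_le_conv4E (k := 3 * n) (k₁ := 2 * n) (k₂ := 2 * n)
    (k₃ := -n) (k₄ := 0) (by ring) (by ring))).trans
    (hc _ _ _ _ (measurable_bumpE _) (measurable_bumpE _) (measurable_bumpE _) (measurable_bumpE _))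
  have hsq := pow_le_pow_left' hest 2
  simp only [mul_pow, XpNormZ_bumpE_sq] at hsq
  push_cast at hsq
  simp only [neg_sq, ne_eq, OfNat.ofNat_ne_zero, not_false_eq_true, zero_pow, add_zero,
    Real.one_rpow, ENNReal.ofReal_one, one_mul] at hsq
  have hres : ENNReal.ofReal ((1 + (2 * n : ℝ) ^ 2) ^ s) *
      ENNReal.ofReal ((1 + (2 * n : ℝ) ^ 2) ^ s) ≤ ENNReal.ofReal ((1 + (3 * n : ℝ) ^ 2) ^ s) := by
    rw [← ENNReal.ofReal_mul (by positivity)]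
    exact ENNReal.ofReal_le_ofReal (resonance_rpow_le hs n)
  have hw₃ : ENNReal.ofReal ((1 + (3 * n : ℝ) ^ 2) ^ s) ≠ 0 := by
    rw [ne_eq, ENNReal.ofReal_eq_zero, not_le]
    positivity
  rw [← ENNReal.mul_le_mul_iff_left hw₃ ENNReal.ofReal_ne_top]
  calc weightMass b' * ENNReal.ofReal ((1 + (3 * n : ℝ) ^ 2) ^ s)
      ≤ _ := (mul_comm _ _).trans_le hsq
    _ = ENNReal.ofReal c ^ 2 * weightMass b ^ 4 * ENNReal.ofReal ((1 + (n : ℝ) ^ 2) ^ s) *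
          (ENNReal.ofReal ((1 + (2 * n : ℝ) ^ 2) ^ s) *
            ENNReal.ofReal ((1 + (2 * n : ℝ) ^ 2) ^ s)) := by ring
    _ ≤ _ := by gcongr

lemma tendsto_ofReal_one_add_sq_rpow {s : ℝ} (hs : s < 0) :
    Tendsto (fun n : ℕ => ENNReal.ofReal ((1 + (n : ℝ) ^ 2) ^ s)) atTop (𝓝 0) := by
  have hbase : Tendsto (fun n : ℕ => 1 + (n : ℝ) ^ 2) atTop atTop :=
    tendsto_atTop_add_const_left _ 1
      ((tendsto_pow_atTop two_ne_zero).comp tendsto_natCast_atTop_atTop)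
  have hpow := (tendsto_rpow_neg_atTop (neg_pos.mpr hs)).comp hbase
  rw [neg_neg] at hpow
  simpa using ENNReal.tendsto_ofReal hpow

/-- The fourfold convolution of `f₁^{(n)}, ..., f₄^{(n)}` dominates
`δ_{ξ,3n} χ_{[-1,1]}(τ + ξ²)`; consequently the periodic estimate
`‖∏uᵢ‖_{X^+_{s,b'}} ≤ c ∏ ‖uᵢ‖_{X^+_{s,b}}` fails for every `s < 0` and all `b, b'`. -/
theorem periodic_quartic_failure :
    (∀ n : ℕ, ∀ p : ℤ × ℝ,
      bump (3 * (n : ℤ)) p ≤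
        conv4 (bump (2 * (n : ℤ))) (bump (2 * (n : ℤ))) (bump (-(n : ℤ))) (bump 0) p) ∧
    ∀ s : ℝ, s < 0 → ∀ b b' : ℝ,
      ¬ ∃ c : ℝ, 0 < c ∧ ∀ F₁ F₂ F₃ F₄ : ℤ × ℝ → ℝ≥0∞,
        Measurable F₁ → Measurable F₂ → Measurable F₃ → Measurable F₄ →
        XpNormZ s b' (conv4E F₁ F₂ F₃ F₄) ≤
          ENNReal.ofReal c * XpNormZ s b F₁ * XpNormZ s b F₂ * XpNormZ s b F₃ *
            XpNormZ s b F₄ := by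
  refine ⟨fun n => bump_le_conv4 (by ring) (by ring), fun s hs b b' ⟨c, _, hc⟩ => ?_⟩
  have hlim := ENNReal.Tendsto.const_mul (tendsto_ofReal_one_add_sq_rpow hs)
    (a := ENNReal.ofReal c ^ 2 * weightMass b ^ 4)
    (Or.inr (by simp [ENNReal.mul_eq_top, weightMass_ne_top]))
  rw [mul_zero] at hlim
  obtain ⟨n, hn⟩ := (hlim.eventually_lt_const (weightMass_pos b')).exists
  exact (weightMass_le_of_quartic_estimate hs.le hc n).not_gt hn
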